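/- Let m ≥ 1, C > 0 and Δ > 0. If g̃ := tanh⁻¹(e^g) ≥ m·log(1 + C·Δ) for some g < 0, then: (a) if Δ ≥ 1, then g ≥ −A·Δ^{−2m} for a constant A depending only on m, C; (b) if Δ ≤ 1, then g ≥ m·log Δ − B for a constant B depending only on m, C, and hence g ≥ −B′·Δ^{−2m} for a constant B′ depending only on m, C. -/
import Mathlib

noncomputable def artanh (x : ℝ) : ℝ := (1/2) * Real.log ((1 + x) / (1 - x))

lemma aux_pow (u : ℝ) (hu : 0 ≤ u) : ∀ n : ℕ, 1 ≤ n → u^n + 1 ≤ (1+u)^n := by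
  intro n hn
  induction n with
  | zero => omega
  | succ k ih =>
    rcases Nat.eq_or_lt_of_le hn with h | h
    · simp [← h]; linarith
    · have hk : 1 ≤ k := by omega
      have := ih hk
      have hpk : (0:ℝ) ≤ u ^ k := pow_nonneg hu k
      calc u^(k+1) + 1 ≤ (u^k + 1) * (1+u) := by rw [pow_succ]; nlinarith
        _ ≤ (1+u)^k * (1+u) := by nlinarith [pow_nonneg (by linarith : (0:ℝ) ≤ 1+u) k]
        _ = (1+u)^(k+1) := by ring

lemma key (x L : ℝ) (hx0 : 0 < x) (hx1 : x < 1) (h : artanh x ≥ L) :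
    Real.exp (2*L) - 1 ≤ x * (Real.exp (2*L) + 1) := by
  have hq : (0:ℝ) < (1 + x) / (1 - x) := div_pos (by linarith) (by linarith)
  have h2 : 2 * L ≤ Real.log ((1 + x) / (1 - x)) := by
    unfold artanh at h; linarith
  have h3 : Real.exp (2*L) ≤ (1 + x) / (1 - x) := by
    calc Real.exp (2*L) ≤ Real.exp (Real.log ((1+x)/(1-x))) := Real.exp_le_exp.mpr h2
      _ = (1+x)/(1-x) := Real.exp_log hq
  rw [le_div_iff₀ (by linarith)] at h3
  nlinarith

lemma expand (m : ℕ) (C Δ : ℝ) (hC : 0 < C) (hΔ : 0 < Δ) :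
    Real.exp (2 * ((m:ℝ) * Real.log (1 + C*Δ))) = (1 + C*Δ)^(2*m) := by
  rw [show (2:ℝ) * ((m:ℝ) * Real.log (1 + C*Δ)) = ((2*m : ℕ):ℝ) * Real.log (1 + C*Δ) by
    push_cast; ring, Real.exp_nat_mul, Real.exp_log (by positivity)]

lemma fact1 (m : ℕ) (hm : 1 ≤ m) (C Δ g : ℝ) (hC : 0 < C) (hΔ : 0 < Δ) (hg : g < 0)
    (h : artanh (Real.exp g) ≥ (m:ℝ) * Real.log (1 + C*Δ)) :
    g ≥ -2 / (C*Δ)^(2*m) := by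
  have hkey := key (Real.exp g) _ (Real.exp_pos g) (Real.exp_lt_one_iff.mpr hg) h
  rw [expand m C Δ hC hΔ] at hkey
  set E := (1 + C*Δ)^(2*m) with hE
  set K := (C*Δ)^(2*m) with hK
  have hKpos : 0 < K := by positivity
  have hKE : K + 1 ≤ E := aux_pow (C*Δ) (by positivity) (2*m) (by omega)
  -- g ≥ 1 - (exp g)⁻¹
  have h1 : -g + 1 ≤ Real.exp (-g) := Real.add_one_le_exp (-g)
  rw [Real.exp_neg] at h1
  set I := (Real.exp g)⁻¹ with hI
  have hIpos : 0 < I := by positivity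
  have hIE : Real.exp g = I⁻¹ := by rw [hI, inv_inv]
  have hEI : I * (E - 1) ≤ E + 1 := by
    have h2 : I * (E - 1) ≤ I * (Real.exp g * (E + 1)) := by
      apply mul_le_mul_of_nonneg_left hkey hIpos.le
    have h3 : I * Real.exp g = 1 := inv_mul_cancel₀ (Real.exp_pos g).ne'
    nlinarith
  -- I * K ≤ K + 2
  have hIK : I * K ≤ K + 2 := by
    rcases le_or_gt I 1 with hI1 | hI1
    · nlinarith
    · nlinarith [mul_le_mul_of_nonneg_left hKE (by linarith : (0:ℝ) ≤ I - 1)]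
  rw [ge_iff_le, div_le_iff₀ hKpos]
  nlinarith

lemma fact2 (m : ℕ) (hm : 1 ≤ m) (C Δ g : ℝ) (hC : 0 < C) (hΔ : 0 < Δ) (hΔ1 : Δ ≤ 1)
    (hg : g < 0) (h : artanh (Real.exp g) ≥ (m:ℝ) * Real.log (1 + C*Δ)) :
    g ≥ Real.log Δ + Real.log (C / ((1+C)^(2*m) + 1)) := by
  have hkey := key (Real.exp g) _ (Real.exp_pos g) (Real.exp_lt_one_iff.mpr hg) h
  rw [expand m C Δ hC hΔ] at hkey
  set E := (1 + C*Δ)^(2*m) with hE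
  set D := (1+C)^(2*m) + 1 with hD
  have hDpos : 0 < D := by positivity
  have hED : E + 1 ≤ D := by
    rw [hE, hD]
    have : (1 + C*Δ)^(2*m) ≤ (1+C)^(2*m) :=
      pow_le_pow_left₀ (by positivity) (by nlinarith) (2*m)
    linarith
  have hbern : 1 + (2*m : ℕ) * (C*Δ) ≤ E := one_add_mul_le_pow (by nlinarith) (2*m)
  have hE1 : C * Δ ≤ E - 1 := by
    have h2m : (1:ℝ) ≤ (2*m : ℕ) := by exact_mod_cast Nat.one_le_iff_ne_zero.mpr (by omega)
    nlinarith [mul_le_mul_of_nonneg_right h2m (le_of_lt (mul_pos hC hΔ))]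
  have hx : Δ * (C / D) ≤ Real.exp g := by
    have h4 : C * Δ ≤ Real.exp g * D := by nlinarith [Real.exp_pos g]
    rw [show Δ * (C / D) = (C*Δ)/D by ring, div_le_iff₀ hDpos]
    linarith
  have hlog : Real.log (Δ * (C / D)) ≤ Real.log (Real.exp g) :=
    Real.log_le_log (by positivity) hx
  rw [Real.log_exp, Real.log_mul (ne_of_gt hΔ) (by positivity)] at hlog
  linarith

theorem stmt_15 (m : ℕ) (hm : 1 ≤ m) (C : ℝ) (hC : 0 < C) :
    (∃ A > 0, ∀ Δ : ℝ, 1 ≤ Δ → ∀ g : ℝ, g < 0 →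
      artanh (Real.exp g) ≥ (m : ℝ) * Real.log (1 + C * Δ) →
      g ≥ -A * Δ ^ (-(2 * (m : ℝ)))) ∧
    (∃ B > 0, ∃ B' > 0, ∀ Δ : ℝ, 0 < Δ → Δ ≤ 1 → ∀ g : ℝ, g < 0 →
      artanh (Real.exp g) ≥ (m : ℝ) * Real.log (1 + C * Δ) →
      g ≥ (m : ℝ) * Real.log Δ - B ∧ g ≥ -B' * Δ ^ (-(2 * (m : ℝ)))) := by
  have hrpow : ∀ Δ : ℝ, 0 < Δ → Δ ^ (-(2 * (m:ℝ))) = (Δ ^ (2*m))⁻¹ := by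
    intro Δ hΔ
    rw [show (2*(m:ℝ)) = ((2*m : ℕ):ℝ) by push_cast; ring, Real.rpow_neg hΔ.le,
      Real.rpow_natCast]
  constructor
  · refine ⟨2 / C^(2*m), by positivity, fun Δ hΔ g hg h => ?_⟩
    have hΔ0 : 0 < Δ := by linarith
    have := fact1 m hm C Δ g hC hΔ0 hg h
    have heq : -(2 / C^(2*m)) * Δ ^ (-(2 * (m:ℝ))) = -2 / (C*Δ)^(2*m) := by
      rw [hrpow Δ hΔ0, mul_pow]
      field_simp
    calc -(2 / C^(2*m)) * Δ ^ (-(2 * (m:ℝ))) = -2 / (C*Δ)^(2*m) := heq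
      _ ≤ g := this
  · set D := (1+C)^(2*m) + 1 with hD
    set c := Real.log (C / D) with hc
    refine ⟨1 + |c|, by positivity, (m:ℝ) + (1 + |c|), by positivity, fun Δ hΔ hΔ1 g hg h => ?_⟩
    have hlogΔ : Real.log Δ ≤ 0 := Real.log_nonpos hΔ.le hΔ1
    have hb1 : g ≥ (m:ℝ) * Real.log Δ - (1 + |c|) := by
      have h2 := fact2 m hm C Δ g hC hΔ hΔ1 hg h
      have hm1 : (1:ℝ) ≤ (m:ℝ) := by exact_mod_cast hm
      have : (m:ℝ) * Real.log Δ ≤ Real.log Δ := by nlinarith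
      have hcc : -(1 + |c|) ≤ c := by
        have := neg_abs_le c; linarith
      linarith
    refine ⟨hb1, ?_⟩
    rw [hrpow Δ hΔ]
    set I := (Δ ^ (2*m))⁻¹ with hIdef
    have hΔp : 0 < Δ ^ (2*m) := by positivity
    have hinv1 : Δ⁻¹ ≤ I := by
      rw [hIdef]
      apply inv_anti₀ hΔp
      calc Δ ^ (2*m) ≤ Δ ^ 1 := pow_le_pow_of_le_one hΔ.le hΔ1 (by omega)
        _ = Δ := pow_one Δ
    have hinv2 : 1 ≤ I := by
      rw [hIdef, le_inv_comm₀ one_pos hΔp]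
      simpa using pow_le_one₀ hΔ.le hΔ1
    have hlogΔ2 : -Δ⁻¹ ≤ Real.log Δ := by
      have := Real.log_le_sub_one_of_pos (inv_pos.mpr hΔ)
      rw [Real.log_inv] at this
      linarith
    have hm0 : (0:ℝ) ≤ (m:ℝ) := by positivity
    have hB0 : (0:ℝ) ≤ 1 + |c| := by positivity
    nlinarith [mul_le_mul_of_nonneg_left hinv1 hm0, mul_le_mul_of_nonneg_left hinv2 hB0,
      mul_le_mul_of_nonneg_left hlogΔ2 hm0]
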